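/- Deduction theorem for LCR: for every set Γ of L≻-formulas and all L≻-formulas φ, ψ, if Γ ∪ {φ} ⊢_LCR ψ then Γ ⊢_LCR →^{m−1}ᵢ₌₁(φ, ψ), i.e., Γ derives the nested implication φ → (φ → (⋯ → (φ → ψ)⋯)) containing m−1 antecedent occurrences of φ. -/
import Mathlib


namespace LCR

/-- Łukasiewicz negation on ℝ. -/
noncomputable def lneg (a : ℝ) : ℝ := 1 - a

/-- Łukasiewicz implication on ℝ. -/
noncomputable def limp (a b : ℝ) : ℝ := min 1 (1 - a + b)

/-- Łukasiewicz strong conjunction ⊙ on ℝ. -/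
noncomputable def lodot (a b : ℝ) : ℝ := max 0 (a + b - 1)

/-- The truth-value set T = {0, 1/(m−1), …, 1}. -/
def Tset (m : ℕ) : Set ℝ := {a | ∃ i : Fin m, a = (i : ℝ) / ((m : ℝ) - 1)}

/-- The k-th truth value k/(m−1). -/
noncomputable def tv (m : ℕ) (k : Fin m) : ℝ := (k : ℝ) / ((m : ℝ) - 1)

/-- Formulas of the language L≻. -/
inductive Formula : Type where
  | var  : ℕ → Formula
  | neg  : Formula → Formula
  | imp  : Formula → Formula → Formula
  | cond : Formula → Formula → Formula
deriving DecidableEq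

namespace Formula
/-- φ ∨ ψ := (φ → ψ) → ψ. -/
def or (φ ψ : Formula) : Formula := .imp (.imp φ ψ) ψ
/-- φ ∧ ψ := ¬(¬φ ∨ ¬ψ). -/
def and (φ ψ : Formula) : Formula := .neg (Formula.or (.neg φ) (.neg ψ))
/-- φ ↔ ψ := (φ → ψ) ∧ (ψ → φ). -/
def iff (φ ψ : Formula) : Formula := Formula.and (.imp φ ψ) (.imp ψ φ)
end Formula

/-- Purely propositional (¬,→)-formulas. -/
inductive PForm : Type where
  | var : ℕ → PForm
  | neg : PForm → PForm
  | imp : PForm → PForm → PForm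

/-- Evaluation of a propositional formula under an assignment. -/
noncomputable def PForm.eval (σ : ℕ → ℝ) : PForm → ℝ
  | .var n => σ n
  | .neg φ => lneg (PForm.eval σ φ)
  | .imp φ ψ => limp (PForm.eval σ φ) (PForm.eval σ ψ)

/-- Tautology of Łukasiewicz m-valued propositional logic. -/
def PForm.Taut (m : ℕ) (φ : PForm) : Prop :=
  ∀ σ : ℕ → ℝ, (∀ n, σ n ∈ Tset m) → PForm.eval σ φ = 1

/-- Substitution of L≻-formulas for the variables of a propositional formula. -/
def PForm.subst (σ : ℕ → Formula) : PForm → Formula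
  | .var n => σ n
  | .neg φ => .neg (PForm.subst σ φ)
  | .imp φ ψ => .imp (PForm.subst σ φ) (PForm.subst σ ψ)

/-- `J` is a family of Rosser–Turquette J-operators: each `J a` is obtained by substitution
into a (¬,→)-definable one-place connective whose value is 1 at inputs equal to `tv m a`
and 0 at all other truth values. -/
def IsJFamily (m : ℕ) (J : Fin m → Formula → Formula) : Prop :=
  ∃ P : Fin m → PForm,
    (∀ a φ, J a φ = PForm.subst (fun _ => φ) (P a)) ∧
    (∀ (a : Fin m) (σ : ℕ → ℝ), (∀ n, σ n ∈ Tset m) →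
      PForm.eval σ (P a) = if σ 0 = tv m a then 1 else 0)

/-- `I` is a family of threshold operators: each `I a` is obtained by substitution into a
(¬,→)-definable one-place connective whose value is 1 at inputs ≥ `tv m a` and 0 otherwise. -/
def IsIFamily (m : ℕ) (I : Fin m → Formula → Formula) : Prop :=
  ∃ P : Fin m → PForm,
    (∀ a φ, I a φ = PForm.subst (fun _ => φ) (P a)) ∧
    (∀ (a : Fin m) (σ : ℕ → ℝ), (∀ n, σ n ∈ Tset m) →
      PForm.eval σ (P a) = if tv m a ≤ σ 0 then 1 else 0)

/-- The index of aᵢ = (m−i)/(m−1) for i = j+1, i.e. m−1−j. -/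
def revIdx {m : ℕ} (j : Fin m) : Fin m := ⟨m - 1 - j.1, by have := j.isLt; omega⟩

/-- Index-level strong conjunction: tv (odotIdx a b) = tv a ⊙ tv b. -/
def odotIdx {m : ℕ} (a b : Fin m) : Fin m :=
  ⟨a.1 + b.1 - (m - 1), by have := a.isLt; have := b.isLt; omega⟩

/-- Nested implication →ⁿᵢ₌₁(φᵢ, ψ) = φₙ → (φₙ₋₁ → (⋯ → (φ₁ → ψ))), with φᵢ = f (i−1). -/
def nestImp : (n : ℕ) → (Fin n → Formula) → Formula → Formula
  | 0, _, ψ => ψ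
  | n+1, f, ψ => .imp (f (Fin.last n)) (nestImp n (fun i => f i.castSucc) ψ)

/-- Theorems of the system LCR (relative to the I-operators used in the rules R_a). -/
inductive Thm (m : ℕ) (I : Fin m → Formula → Formula) : Formula → Prop where
  | taut : ∀ (ψ : PForm) (σ : ℕ → Formula), PForm.Taut m ψ → Thm m I (PForm.subst σ ψ)
  | a1 : ∀ φ ψ θ : Formula,
      Thm m I (.imp (.cond φ (ψ.and θ)) ((Formula.cond φ ψ).and (.cond φ θ)))
  | a2 : ∀ φ ψ θ : Formula,
      Thm m I (.imp ((Formula.cond φ ψ).and (.cond φ θ)) (.cond φ (ψ.and θ)))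
  | a3 : ∀ (φ : Formula) (p : ℕ), Thm m I (.cond φ (.imp (.var p) (.var p)))
  | mp : ∀ φ ψ : Formula, Thm m I (.imp φ ψ) → Thm m I φ → Thm m I ψ
  | rcea : ∀ φ ψ θ : Formula,
      Thm m I (φ.iff ψ) → Thm m I ((Formula.cond φ θ).iff (.cond ψ θ))
  | rcec : ∀ φ ψ θ : Formula,
      Thm m I (φ.iff ψ) → Thm m I ((Formula.cond θ φ).iff (.cond θ ψ))
  | ra : ∀ (a : Fin m) (φ : Formula) (γ : Fin m → Formula) (δ : Formula),
      (∀ b : Fin m,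
        Thm m I (nestImp m (fun j => I (odotIdx (revIdx j) b) (γ j)) (I (odotIdx a b) δ))) →
      Thm m I (nestImp m (fun j => I (revIdx j) (.cond φ (γ j))) (I a (.cond φ δ)))

/-- Γ ⊢_LCR φ : derivability from Γ by theorems of LCR and modus ponens. -/
inductive Deriv (m : ℕ) (I : Fin m → Formula → Formula) (Γ : Set Formula) : Formula → Prop where
  | thm : ∀ φ, Thm m I φ → Deriv m I Γ φ
  | mem : ∀ φ, φ ∈ Γ → Deriv m I Γ φ
  | mp : ∀ φ ψ, Deriv m I Γ (.imp φ ψ) → Deriv m I Γ φ → Deriv m I Γ ψ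

/-- A Kripke LCR model over a set of worlds W. -/
structure Model (m : ℕ) (W : Type) : Type where
  ne : Nonempty W
  R : (Fin m → Set W) → W → W → ℝ
  R_mem : ∀ X x y, R X x y ∈ Tset m
  v : ℕ → W → ℝ
  v_mem : ∀ p x, v p x ∈ Tset m

/-- Valuation of formulas in a Kripke LCR model. -/
noncomputable def Model.val {m : ℕ} {W : Type} (M : Model m W) : Formula → W → ℝ
  | .var p, x => M.v p x
  | .neg φ, x => lneg (M.val φ x)
  | .imp φ ψ, x => limp (M.val φ x) (M.val ψ x)
  | .cond φ ψ, x =>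
      sInf (Set.range fun y : W =>
        limp (M.R (fun i => {z : W | M.val φ z = tv m i}) x y) (M.val ψ y))

/-- Semantic consequence Γ ⊨ φ over all Kripke LCR models. -/
def Entails (m : ℕ) (Γ : Set Formula) (φ : Formula) : Prop :=
  ∀ (W : Type) (M : Model m W) (x : W), (∀ ψ ∈ Γ, M.val ψ x = 1) → M.val φ x = 1

/-- Syntactic consistency. -/
def Consistent (m : ℕ) (I : Fin m → Formula → Formula) (Γ : Set Formula) : Prop :=
  ¬ ∃ φ : Formula, Deriv m I Γ φ ∧ Deriv m I Γ (.neg φ)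

/-- Maximal consistency. -/
def MaxConsistent (m : ℕ) (I : Fin m → Formula → Formula) (Γ : Set Formula) : Prop :=
  Consistent m I Γ ∧ ∀ φ : Formula, Deriv m I Γ φ → φ ∈ Γ


/-- →ⁿᵢ₌₁(φ, ψ) : the n-fold nested implication φ → (φ → (⋯ → (φ → ψ))). -/
def iterImp : ℕ → Formula → Formula → Formula
  | 0, _, ψ => ψ
  | n+1, φ, ψ => .imp φ (iterImp n φ ψ)

/-- Propositional analogue of `iterImp`. -/
def pIter : ℕ → PForm → PForm → PForm
  | 0, _, q => q
  | n+1, p, q => .imp p (pIter n p q)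

lemma pIter_subst (σ : ℕ → Formula) : ∀ (n : ℕ) (p q : PForm),
    PForm.subst σ (pIter n p q) = iterImp n (PForm.subst σ p) (PForm.subst σ q)
  | 0, _, _ => rfl
  | n+1, p, q => by
      simp [pIter, iterImp, PForm.subst, pIter_subst σ n]

/-- Real-valued iterated Łukasiewicz implication. -/
noncomputable def itl : ℕ → ℝ → ℝ → ℝ
  | 0, _, b => b
  | n+1, a, b => limp a (itl n a b)

lemma eval_pIter (σ : ℕ → ℝ) : ∀ (n : ℕ) (p q : PForm),
    PForm.eval σ (pIter n p q) = itl n (PForm.eval σ p) (PForm.eval σ q)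
  | 0, _, _ => rfl
  | n+1, p, q => by
      simp [pIter, itl, PForm.eval, eval_pIter σ n]

lemma mem_Tset_nonneg {m : ℕ} (hm : 2 ≤ m) {a : ℝ} (ha : a ∈ Tset m) : 0 ≤ a := by
  obtain ⟨i, rfl⟩ := ha
  have hd : (0:ℝ) < (m:ℝ) - 1 := by
    have : (2:ℝ) ≤ (m:ℝ) := by exact_mod_cast hm
    linarith
  positivity

lemma mem_Tset_le_one {m : ℕ} (hm : 2 ≤ m) {a : ℝ} (ha : a ∈ Tset m) : a ≤ 1 := by
  obtain ⟨i, rfl⟩ := ha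
  have hd : (0:ℝ) < (m:ℝ) - 1 := by
    have : (2:ℝ) ≤ (m:ℝ) := by exact_mod_cast hm
    linarith
  rw [div_le_one hd]
  have : (i : ℕ) ≤ m - 1 := by have := i.isLt; omega
  have h1 : ((i:ℕ):ℝ) ≤ ((m-1:ℕ):ℝ) := by exact_mod_cast this
  have h2 : ((m-1:ℕ):ℝ) = (m:ℝ) - 1 := by
    have : 1 ≤ m := by omega
    push_cast [this]; ring
  linarith [h1, h2.symm ▸ h1]

lemma Tset_gap {m : ℕ} (hm : 2 ≤ m) {a : ℝ} (ha : a ∈ Tset m) (hne : a ≠ 1) :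
    1 ≤ ((m:ℝ) - 1) * (1 - a) := by
  obtain ⟨i, rfl⟩ := ha
  have hd : (0:ℝ) < (m:ℝ) - 1 := by
    have : (2:ℝ) ≤ (m:ℝ) := by exact_mod_cast hm
    linarith
  have hi : (i : ℕ) ≠ m - 1 := by
    intro h
    apply hne
    rw [h]
    have h2 : ((m-1:ℕ):ℝ) = (m:ℝ) - 1 := by
      have : 1 ≤ m := by omega
      push_cast [this]; ring
    rw [h2, div_self (ne_of_gt hd)]
  have hle : (i : ℕ) ≤ m - 2 := by have := i.isLt; omega
  have h1 : ((i:ℕ):ℝ) ≤ (m:ℝ) - 2 := by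
    have h2 : ((m-2:ℕ):ℝ) = (m:ℝ) - 2 := by push_cast [hm]; ring
    have := (Nat.cast_le (α := ℝ)).mpr hle
    linarith [h2 ▸ this]
  have : ((m:ℝ) - 1) * (1 - (i:ℝ) / ((m:ℝ) - 1)) = ((m:ℝ) - 1) - (i:ℝ) := by
    field_simp
  rw [this]; linarith

lemma itl_eq (n : ℕ) (a b : ℝ) (ha : a ≤ 1) (hb : b ≤ 1) :
    itl n a b = min 1 ((n:ℝ) * (1 - a) + b) := by
  induction n with
  | zero => simp [itl, min_eq_right hb]
  | succ n ih =>
    show limp a (itl n a b) = _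
    rw [ih, limp]
    rcases le_total ((n:ℝ) * (1 - a) + b) 1 with h | h
    · rw [min_eq_right h]
      congr 1
      push_cast; ring
    · rw [min_eq_left h, eq_comm, min_eq_left, min_eq_left (by linarith)]
      push_cast
      nlinarith [sub_nonneg.mpr ha]

lemma itl_val {m : ℕ} (hm : 2 ≤ m) {a : ℝ} (b : ℝ) (ha : a ∈ Tset m)
    (hb0 : 0 ≤ b) (hb1 : b ≤ 1) :
    itl (m-1) a b = if a = 1 then b else 1 := by
  have ha1 : a ≤ 1 := mem_Tset_le_one hm ha
  rw [itl_eq _ _ _ ha1 hb1]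
  have hcast : ((m-1:ℕ):ℝ) = (m:ℝ) - 1 := by
    have : 1 ≤ m := by omega
    push_cast [this]; ring
  split
  · next h => rw [h]; simp [min_eq_right hb1]
  · next h =>
      have := Tset_gap hm ha h
      rw [min_eq_left (by rw [hcast]; linarith)]

lemma limp_self (a : ℝ) : limp a a = 1 := by simp [limp]

lemma limp_to_one {a : ℝ} (h : a ≤ 1) : limp a 1 = 1 := by
  simp [limp]; linarith

lemma limp_nonneg {a b : ℝ} (ha : a ≤ 1) (hb : 0 ≤ b) : 0 ≤ limp a b := by
  simp only [limp, le_min_iff]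
  exact ⟨by norm_num, by linarith⟩

lemma limp_le_one (a b : ℝ) : limp a b ≤ 1 := min_le_left _ _

lemma taut_K (m : ℕ) (hm : 2 ≤ m) :
    PForm.Taut m (.imp (.var 1) (pIter (m-1) (.var 0) (.var 1))) := by
  intro σ hσ
  have ha := hσ 0
  have hb := hσ 1
  simp only [PForm.eval, eval_pIter]
  rw [itl_val hm _ ha (mem_Tset_nonneg hm hb) (mem_Tset_le_one hm hb)]
  split
  · exact limp_self _
  · exact limp_to_one (mem_Tset_le_one hm hb)

lemma taut_ID (m : ℕ) (hm : 2 ≤ m) :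
    PForm.Taut m (pIter (m-1) (.var 0) (.var 0)) := by
  intro σ hσ
  have ha := hσ 0
  simp only [eval_pIter, PForm.eval]
  rw [itl_val hm _ ha (mem_Tset_nonneg hm ha) (mem_Tset_le_one hm ha)]
  split
  · assumption
  · rfl

lemma taut_S (m : ℕ) (hm : 2 ≤ m) :
    PForm.Taut m (.imp (pIter (m-1) (.var 0) (.imp (.var 1) (.var 2)))
      (.imp (pIter (m-1) (.var 0) (.var 1)) (pIter (m-1) (.var 0) (.var 2)))) := by
  intro σ hσ
  have ha := hσ 0
  have hb := hσ 1
  have hc := hσ 2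
  simp only [PForm.eval, eval_pIter]
  rw [itl_val hm _ ha (limp_nonneg (mem_Tset_le_one hm hb) (mem_Tset_nonneg hm hc))
      (limp_le_one _ _),
    itl_val hm _ ha (mem_Tset_nonneg hm hb) (mem_Tset_le_one hm hb),
    itl_val hm _ ha (mem_Tset_nonneg hm hc) (mem_Tset_le_one hm hc)]
  split
  · exact limp_self _
  · rw [limp_to_one (by norm_num [limp]), limp_to_one (by norm_num [limp])]

lemma thm_K {m : ℕ} (hm : 2 ≤ m) (I : Fin m → Formula → Formula) (φ ψ : Formula) :
    Thm m I (.imp ψ (iterImp (m-1) φ ψ)) := by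
  have h := Thm.taut (m := m) (I := I)
    (.imp (.var 1) (pIter (m-1) (.var 0) (.var 1)))
    (fun k => if k = 0 then φ else ψ) (taut_K m hm)
  simpa [PForm.subst, pIter_subst] using h

lemma thm_ID {m : ℕ} (hm : 2 ≤ m) (I : Fin m → Formula → Formula) (φ : Formula) :
    Thm m I (iterImp (m-1) φ φ) := by
  have h := Thm.taut (m := m) (I := I)
    (pIter (m-1) (.var 0) (.var 0)) (fun _ => φ) (taut_ID m hm)
  simpa [PForm.subst, pIter_subst] using h

lemma thm_S {m : ℕ} (hm : 2 ≤ m) (I : Fin m → Formula → Formula) (φ χ ψ : Formula) :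
    Thm m I (.imp (iterImp (m-1) φ (.imp χ ψ))
      (.imp (iterImp (m-1) φ χ) (iterImp (m-1) φ ψ))) := by
  have h := Thm.taut (m := m) (I := I)
    (.imp (pIter (m-1) (.var 0) (.imp (.var 1) (.var 2)))
      (.imp (pIter (m-1) (.var 0) (.var 1)) (pIter (m-1) (.var 0) (.var 2))))
    (fun k => if k = 0 then φ else if k = 1 then χ else ψ) (taut_S m hm)
  simpa [PForm.subst, pIter_subst] using h

/-- deduction theorem for LCR: if Γ ∪ {φ} ⊢ ψ then
Γ ⊢ φ → (φ → (⋯ → (φ → ψ))) with m−1 antecedent occurrences of φ. -/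
theorem deduction_theorem (m : ℕ) (hm : 2 ≤ m)
    (I : Fin m → Formula → Formula) (hI : IsIFamily m I)
    (Γ : Set Formula) (φ ψ : Formula)
    (h : Deriv m I (Γ ∪ {φ}) ψ) :
    Deriv m I Γ (iterImp (m - 1) φ ψ) := by
  induction h with
  | thm χ hχ =>
      exact Deriv.mp _ _ (Deriv.thm _ (thm_K hm I φ χ)) (Deriv.thm _ hχ)
  | mem χ hχ =>
      rcases hχ with h | h
      · exact Deriv.mp _ _ (Deriv.thm _ (thm_K hm I φ χ)) (Deriv.mem _ h)
      · rcases Set.mem_singleton_iff.mp h with rfl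
        exact Deriv.thm _ (thm_ID hm I χ)
  | mp χ ψ' _ _ ih1 ih2 =>
      exact Deriv.mp _ _ (Deriv.mp _ _ (Deriv.thm _ (thm_S hm I φ χ ψ')) ih1) ih2

end LCR
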